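/- arXiv:1912.11218 — 4 statements merged into one kernel-verified Lean document; each statement's English description precedes it below -/
import Mathlib

section
/- For probability measures P and Q on ℝ with cumulative distribution functions F and G respectively, the continuous-ranked probability score CRPS(F, y) = −∫ (F(y') − 1{y' ≥ y})² dy' induces the divergence d(F,G) := E_{Y∼G}[CRPS(G,Y)] − E_{Y∼G}[CRPS(F,Y)] = ∫ (F(y) − G(y))² dy. In particular CRPS is a proper scoring rule. -/
/-!
Write `s_y := 1{y ≤ ·}` and expand `(F - s_y)² = (F - G)² + 2 (F - G)(G - s_y) + (G - s_y)²`.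
Integrating in `t` gives `CRPS G y - CRPS F y = ∫ (F - G)² + 2 ∫ (F - G)(G - s_y)`.
When `Y ∼ Q` and `G` is the CDF of `Q`, the step `s_Y(t)` has mean `G t` for every `t`, so after
exchanging the two integrals (Fubini) the cross term averages to zero.
-/

open MeasureTheory

/-- The continuous-ranked probability score of a distribution function `F`
at a realized outcome `y`. -/
noncomputable def CRPS (F : ℝ → ℝ) (y : ℝ) : ℝ :=
  -∫ t, (F t - if y ≤ t then (1 : ℝ) else 0) ^ 2

open ProbabilityTheory

lemma integrable_mul_of_integrable_sq {α : Type*} [MeasurableSpace α] {μ : Measure α}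
    {f g : α → ℝ} (hf : AEStronglyMeasurable f μ) (hg : AEStronglyMeasurable g μ)
    (hf2 : Integrable (fun x => f x ^ 2) μ) (hg2 : Integrable (fun x => g x ^ 2) μ) :
    Integrable (fun x => f x * g x) μ :=
  ((memLp_two_iff_integrable_sq hf).2 hf2).integrable_mul ((memLp_two_iff_integrable_sq hg).2 hg2)

lemma measurable_step : Measurable (fun p : ℝ × ℝ => if p.1 ≤ p.2 then (1 : ℝ) else 0) :=
  Measurable.ite (measurableSet_le measurable_fst measurable_snd) measurable_const measurable_const

lemma integral_cdf_sub_step (μ : Measure ℝ) [IsProbabilityMeasure μ] (t : ℝ) :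
    ∫ y, (cdf μ t - if y ≤ t then (1 : ℝ) else 0) ∂μ = 0 := by
  have hstep (y : ℝ) : (if y ≤ t then (1 : ℝ) else 0) = (Set.Iic t).indicator 1 y := by
    simp [Set.indicator]
  simp_rw [hstep]
  rw [integral_sub (integrable_const _) ((integrable_const 1).indicator measurableSet_Iic),
    integral_indicator_one measurableSet_Iic, cdf_eq_real]
  simp

lemma integral_integral_mul_cdf_sub_step (μ : Measure ℝ) [IsProbabilityMeasure μ] {f : ℝ → ℝ}
    (hf : Integrable (fun p : ℝ × ℝ => f p.2 * (cdf μ p.2 - if p.1 ≤ p.2 then (1 : ℝ) else 0))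
      (μ.prod volume)) :
    ∫ y, (∫ t, f t * (cdf μ t - if y ≤ t then (1 : ℝ) else 0)) ∂μ = 0 := by
  rw [integral_integral_swap hf]
  simp_rw [integral_const_mul, integral_cdf_sub_step, mul_zero, integral_zero]

lemma integrable_prod_sq_sub_step {μ : Measure ℝ} {G : ℝ → ℝ} (hG : Measurable G)
    (hGy : ∀ y, Integrable (fun t => (G t - if y ≤ t then (1 : ℝ) else 0) ^ 2))
    (hGint : Integrable (CRPS G) μ) :
    Integrable (fun p : ℝ × ℝ => (G p.2 - if p.1 ≤ p.2 then (1 : ℝ) else 0) ^ 2)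
      (μ.prod volume) := by
  refine (integrable_prod_iff ?_).2 ⟨.of_forall hGy, ?_⟩
  · exact ((hG.comp measurable_snd).sub measurable_step).pow_const 2 |>.aestronglyMeasurable
  · refine hGint.neg.congr (.of_forall fun y => ?_)
    simp [CRPS]

lemma CRPS_sub_CRPS {F G : ℝ → ℝ} {y : ℝ} (hFG : Integrable (fun t => (F t - G t) ^ 2))
    (hGy : Integrable (fun t => (G t - if y ≤ t then (1 : ℝ) else 0) ^ 2))
    (hcross : Integrable (fun t => (F t - G t) * (G t - if y ≤ t then (1 : ℝ) else 0))) :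
    CRPS G y - CRPS F y =
      (∫ t, (F t - G t) ^ 2) + 2 * ∫ t, (F t - G t) * (G t - if y ≤ t then (1 : ℝ) else 0) := by
  have hexpand : (fun t => (F t - if y ≤ t then (1 : ℝ) else 0) ^ 2) = fun t =>
      ((F t - G t) ^ 2 + 2 * ((F t - G t) * (G t - if y ≤ t then (1 : ℝ) else 0))) +
        (G t - if y ≤ t then (1 : ℝ) else 0) ^ 2 := by
    ext t
    ring
  have hsum : Integrable (fun t =>
      (F t - G t) ^ 2 + 2 * ((F t - G t) * (G t - if y ≤ t then (1 : ℝ) else 0))) :=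
    hFG.add (hcross.const_mul 2)
  rw [CRPS, CRPS, hexpand, integral_add hsum hGy, integral_add hFG (hcross.const_mul 2),
    integral_const_mul]
  ring

theorem crps_divergence_general (P Q : Measure ℝ) [IsProbabilityMeasure P] [IsProbabilityMeasure Q]
    (F G : ℝ → ℝ)
    (hF : ∀ y, F y = (P (Set.Iic y)).toReal)
    (hG : ∀ y, G y = (Q (Set.Iic y)).toReal)
    (hGint : Integrable (fun y => CRPS G y) Q)
    (hFG : Integrable (fun t => (F t - G t) ^ 2))
    (hGy : ∀ y, Integrable (fun t => (G t - if y ≤ t then (1 : ℝ) else 0) ^ 2)) :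
    (∫ y, CRPS G y ∂Q) - (∫ y, CRPS F y ∂Q) = ∫ t, (F t - G t) ^ 2 ∧
    (∫ y, CRPS F y ∂Q) ≤ ∫ y, CRPS G y ∂Q := by
  obtain rfl : F = cdf P := funext fun y => by rw [hF, cdf_eq_real, measureReal_def]
  obtain rfl : G = cdf Q := funext fun y => by rw [hG, cdf_eq_real, measureReal_def]
  have hdiff : Measurable fun t => cdf P t - cdf Q t :=
    (cdf P).mono.measurable.sub (cdf Q).mono.measurable
  have hcross : Integrable (fun p : ℝ × ℝ =>
      (cdf P p.2 - cdf Q p.2) * (cdf Q p.2 - if p.1 ≤ p.2 then (1 : ℝ) else 0)) (Q.prod volume) :=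
    integrable_mul_of_integrable_sq (hdiff.comp measurable_snd).aestronglyMeasurable
      (((cdf Q).mono.measurable.comp measurable_snd).sub measurable_step).aestronglyMeasurable
      (hFG.comp_snd Q) (integrable_prod_sq_sub_step (cdf Q).mono.measurable hGy hGint)
  have hpointwise (y : ℝ) : CRPS (cdf Q) y - CRPS (cdf P) y = (∫ t, (cdf P t - cdf Q t) ^ 2) +
      2 * ∫ t, (cdf P t - cdf Q t) * (cdf Q t - if y ≤ t then (1 : ℝ) else 0) :=
    have hstep : Measurable fun t => cdf Q t - if y ≤ t then (1 : ℝ) else 0 :=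
      (cdf Q).mono.measurable.sub (measurable_step.comp (measurable_const.prodMk measurable_id))
    CRPS_sub_CRPS hFG (hGy y) (integrable_mul_of_integrable_sq hdiff.aestronglyMeasurable
      hstep.aestronglyMeasurable hFG (hGy y))
  have hA : Integrable (fun y =>
      ∫ t, (cdf P t - cdf Q t) * (cdf Q t - if y ≤ t then (1 : ℝ) else 0)) Q :=
    hcross.integral_prod_left
  have hFint : Integrable (CRPS (cdf P)) Q :=
    (hGint.sub ((integrable_const _).add (hA.const_mul 2))).congr
      (.of_forall fun y => by simp only [Pi.sub_apply, Pi.add_apply]; linarith [hpointwise y])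
  have hmain : (∫ y, CRPS (cdf Q) y ∂Q) - (∫ y, CRPS (cdf P) y ∂Q) =
      ∫ t, (cdf P t - cdf Q t) ^ 2 := by
    rw [← integral_sub hGint hFint, integral_congr_ae (.of_forall hpointwise),
      integral_add (integrable_const _) (hA.const_mul 2), integral_const_mul,
      integral_integral_mul_cdf_sub_step Q hcross]
    simp
  have hnonneg : 0 ≤ ∫ t, (cdf P t - cdf Q t) ^ 2 := integral_nonneg fun t => sq_nonneg _
  exact ⟨hmain, by linarith⟩

/-- the divergence induced by CRPS is the squared L² distance of
the CDFs, and consequently CRPS is a proper scoring rule. -/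
theorem crps_divergence (P Q : Measure ℝ) [IsProbabilityMeasure P] [IsProbabilityMeasure Q]
    (F G : ℝ → ℝ)
    (hF : ∀ y, F y = (P (Set.Iic y)).toReal)
    (hG : ∀ y, G y = (Q (Set.Iic y)).toReal)
    (hFint : Integrable (fun y => CRPS F y) Q)
    (hGint : Integrable (fun y => CRPS G y) Q)
    (hFG : Integrable (fun t => (F t - G t) ^ 2))
    (hFy : ∀ y, Integrable (fun t => (F t - if y ≤ t then (1 : ℝ) else 0) ^ 2))
    (hGy : ∀ y, Integrable (fun t => (G t - if y ≤ t then (1 : ℝ) else 0) ^ 2)) :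
    (∫ y, CRPS G y ∂Q) - (∫ y, CRPS F y ∂Q) = ∫ t, (F t - G t) ^ 2 ∧
    (∫ y, CRPS F y ∂Q) ≤ ∫ y, CRPS G y ∂Q :=
  crps_divergence_general P Q F G hF hG hGint hFG hGy
end

section
/- Fix n data points with, for each i, positive real numbers p_{i,1},…,p_{i,K} (leave-one-out predictive densities) and a unique index k*_i achieving the maximum of log p_{i,k} over k. Suppose the separation condition holds: log p_{i,k*_i} ≥ log p_{i,k'} + L for all k' ≠ k*_i and all i. Then for any weight vector w in the simplex, (1/n)∑_i log(∑_k w_k p_{i,k}) ≤ (1/n)∑_i log p_{i,k*_i} + (1/n)∑_i log(w_{k*_i} + (K−1)e^{−L}). -/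
/-!
Fix a data point `i` and write `q k = p i k`, `k₀ = k*_i`. Separation gives `q k ≤ e^{-L} q k₀`
for `k ≠ k₀`, and each weight is at most `1`, so the mixture `∑ w_k q_k` is at most
`q k₀ (w_{k₀} + (K - 1) e^{-L})`. Taking logarithms and averaging over `i` gives the bound.
-/

open Finset

lemma le_mul_exp_neg_of_log_add_le {x y L : ℝ} (hx : 0 < x) (hy : 0 < y)
    (h : Real.log x + L ≤ Real.log y) : x ≤ y * Real.exp (-L) := by
  rw [← Real.exp_log hy, ← Real.exp_add]
  exact (Real.log_le_iff_le_exp hx).1 (by linarith)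

section Mixture

variable {ι : Type*} [Fintype ι] {w q : ι → ℝ}

lemma sum_mul_pos_of_simplex (hw : ∀ k, 0 ≤ w k) (hw1 : ∑ k, w k = 1) (hq : ∀ k, 0 < q k) :
    0 < ∑ k, w k * q k := by
  obtain ⟨k, -, hk⟩ := exists_ne_zero_of_sum_ne_zero (hw1.symm ▸ one_ne_zero : ∑ k, w k ≠ 0)
  exact sum_pos' (fun j _ => mul_nonneg (hw j) (hq j).le)
    ⟨k, mem_univ k, mul_pos ((hw k).lt_of_ne' hk) (hq k)⟩

lemma sum_mul_le_of_dominated {k₀ : ι} {c : ℝ} (hw1 : ∀ k, w k ≤ 1) (hq : ∀ k, 0 ≤ q k)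
    (hdom : ∀ k, k ≠ k₀ → q k ≤ q k₀ * c) :
    ∑ k, w k * q k ≤ q k₀ * (w k₀ + ((Fintype.card ι : ℝ) - 1) * c) := by
  classical
  have hrest : ∑ k ∈ univ.erase k₀, w k * q k ≤ ((Fintype.card ι : ℝ) - 1) * (q k₀ * c) := by
    calc ∑ k ∈ univ.erase k₀, w k * q k
        ≤ ∑ _k ∈ univ.erase k₀, q k₀ * c := by
          refine sum_le_sum fun k hk => ?_
          calc w k * q k ≤ 1 * q k := mul_le_mul_of_nonneg_right (hw1 k) (hq k)
            _ ≤ q k₀ * c := (one_mul (q k)).symm ▸ hdom k (ne_of_mem_erase hk)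
      _ = ((Fintype.card ι : ℝ) - 1) * (q k₀ * c) := by
          rw [sum_const, nsmul_eq_mul, cast_card_erase_of_mem (mem_univ k₀), card_univ]
  rw [← sum_erase_add _ _ (mem_univ k₀)]
  linarith

lemma log_sum_mul_le_of_dominated {k₀ : ι} {c : ℝ} (hw : ∀ k, 0 ≤ w k) (hw1 : ∑ k, w k = 1)
    (hq : ∀ k, 0 < q k) (hdom : ∀ k, k ≠ k₀ → q k ≤ q k₀ * c) :
    Real.log (∑ k, w k * q k) ≤
      Real.log (q k₀) + Real.log (w k₀ + ((Fintype.card ι : ℝ) - 1) * c) := by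
  have hle_one : ∀ k, w k ≤ 1 := fun k => hw1 ▸ single_le_sum (fun j _ => hw j) (mem_univ k)
  have hpos := sum_mul_pos_of_simplex hw hw1 hq
  have hbound := sum_mul_le_of_dominated hle_one (fun k => (hq k).le) hdom
  have hfactor : 0 < w k₀ + ((Fintype.card ι : ℝ) - 1) * c :=
    pos_of_mul_pos_right (hpos.trans_le hbound) (hq k₀).le
  rw [← Real.log_mul (hq k₀).ne' hfactor.ne']
  exact Real.log_le_log hpos hbound

end Mixture

theorem stacking_separation_bound_general (n K : ℕ)
    (p : Fin n → Fin K → ℝ) (hp : ∀ i k, 0 < p i k)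
    (kstar : Fin n → Fin K) (L : ℝ)
    (hbest : ∀ i k, k ≠ kstar i →
      Real.log (p i k) + L ≤ Real.log (p i (kstar i))) :
    ∀ w : Fin K → ℝ, (∀ k, 0 ≤ w k) → ∑ k, w k = 1 →
      (1 / n : ℝ) * ∑ i, Real.log (∑ k, w k * p i k) ≤
        (1 / n : ℝ) * ∑ i, Real.log (p i (kstar i)) +
          (1 / n : ℝ) * ∑ i, Real.log (w (kstar i) + ((K : ℝ) - 1) * Real.exp (-L)) := by
  intro w hw hw1
  rw [← mul_add, ← sum_add_distrib]
  refine mul_le_mul_of_nonneg_left (sum_le_sum fun i _ => ?_) (by positivity)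
  have hdom : ∀ k, k ≠ kstar i → p i k ≤ p i (kstar i) * Real.exp (-L) := fun k hk =>
    le_mul_exp_neg_of_log_add_le (hp i k) (hp i (kstar i)) (hbest i k hk)
  simpa only [Fintype.card_fin] using log_sum_mul_le_of_dominated hw hw1 (hp i) hdom

/-- under `L`-separation of the pointwise best model, the stacked
leave-one-out log score is bounded by the best-model log density plus
`log(w_{k*_i} + (K−1)e^{−L})`. -/
theorem stacking_separation_bound (n K : ℕ) (hn : 0 < n) (hK : 1 ≤ K)
    (p : Fin n → Fin K → ℝ) (hp : ∀ i k, 0 < p i k)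
    (kstar : Fin n → Fin K) (L : ℝ)
    (hbest : ∀ i k, k ≠ kstar i →
      Real.log (p i k) + L ≤ Real.log (p i (kstar i))) :
    ∀ w : Fin K → ℝ, (∀ k, 0 ≤ w k) → ∑ k, w k = 1 →
      (1 / n : ℝ) * ∑ i, Real.log (∑ k, w k * p i k) ≤
        (1 / n : ℝ) * ∑ i, Real.log (p i (kstar i)) +
          (1 / n : ℝ) * ∑ i, Real.log (w (kstar i) + ((K : ℝ) - 1) * Real.exp (-L)) :=
  stacking_separation_bound_general n K p hp kstar L hbest
end

section
/- Fix n data points, for each i positive reals p_{i,1},…,p_{i,K} with a unique pointwise-best index k*_i, and suppose log p_{i,k*_i} ≥ log p_{i,k'} + L for all k' ≠ k*_i. Let n_k = #{i : k*_i = k} and assume n_k > 0 for all k. Let w^(L) be any maximizer over the simplex of F_L(w) = (1/n)∑_i log(∑_k w_k p_{i,k}). Then as L → ∞ (with the counts n_k held fixed, i.e., along any sequence of instances with the same assignment of best indices and separation L), w^(L) converges to the vector (n_1/n, …, n_K/n). -/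
/-!
Write `δ = exp (-L)` and `q k = n_k / n`. Separation gives `p i k ≤ δ * p i (k* i)` for
`k ≠ k* i`, so the mixture `∑ k, w k * p i k` lies between `q (k* i) * p i (k* i)` (when `w = q`)
and `p i (k* i) * (w (k* i) + δ)`. Comparing the objective at the maximizer `w` with its value at
`q` yields the Gibbs-type inequality `∑ k, q k * log ((w k + δ) / q k) ≥ 0`. As
`∑ k, (w k + δ) = 1 + K δ`, the bound `log x ≤ 2 (√x - 1)` turns it into
`∑ k, (√(w k + δ) - √(q k))² ≤ K δ`, which tends to `0` as `L → ∞`.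
-/

open Finset Filter Real Topology

variable {ι κ : Type*} [Fintype ι]

lemma log_le_two_mul_sqrt_sub_one {x : ℝ} (hx : 0 < x) : log x ≤ 2 * (√x - 1) := by
  have h := log_le_sub_one_of_pos (sqrt_pos.mpr hx)
  rw [log_sqrt hx.le] at h
  linarith

lemma mul_log_sub_log_le {q v : ℝ} (hq : 0 ≤ q) (hv : 0 < v) :
    q * (log v - log q) ≤ 2 * (√q * √v - q) := by
  rcases hq.eq_or_lt with rfl | hq
  · simp
  have h := log_le_two_mul_sqrt_sub_one (div_pos hv hq)
  rw [log_div hv.ne' hq.ne', sqrt_div' _ hq.le] at h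
  have hsq : √q * √q = q := mul_self_sqrt hq.le
  have hsqrt : 0 < √q := sqrt_pos.mpr hq
  have hmul : q * (√v / √q) = √q * √v := by
    calc q * (√v / √q) = √q * √q * (√v / √q) := by rw [hsq]
      _ = √q * √v := by field_simp
  calc q * (log v - log q) ≤ q * (2 * (√v / √q - 1)) := mul_le_mul_of_nonneg_left h hq.le
    _ = 2 * (√q * √v - q) := by rw [← hmul]; ring

/-- Gibbs' inequality `∑ q log (v / q) ≥ 0` bounds the squared Hellinger distance. -/
lemma sum_sq_sqrt_sub_sqrt_le {q v : ι → ℝ} (hq : ∀ k, 0 ≤ q k) (hv : ∀ k, 0 < v k)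
    (hgibbs : 0 ≤ ∑ k, q k * (log (v k) - log (q k))) :
    ∑ k, (√(v k) - √(q k)) ^ 2 ≤ ∑ k, v k - ∑ k, q k := by
  have hexpand : ∀ k, (√(v k) - √(q k)) ^ 2 = v k - q k - 2 * (√(q k) * √(v k) - q k) := by
    intro k
    rw [sub_sq, sq_sqrt (hv k).le, sq_sqrt (hq k)]
    ring
  have hsum : ∑ k, q k * (log (v k) - log (q k)) ≤ ∑ k, 2 * (√(q k) * √(v k) - q k) :=
    sum_le_sum fun k _ => mul_log_sub_log_le (hq k) (hv k)
  simp only [hexpand, sum_sub_distrib, ← mul_sum] at hsum ⊢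
  linarith

lemma le_exp_neg_mul_of_log_add_le {a b L : ℝ} (ha : 0 < a) (hb : 0 < b)
    (h : log a + L ≤ log b) : a ≤ exp (-L) * b := by
  rw [← log_le_log_iff ha (by positivity), log_mul (exp_pos _).ne' hb.ne', log_exp]
  linarith

lemma sum_mul_pos_of_mem_stdSimplex {u p : ι → ℝ} (hu : u ∈ stdSimplex ℝ ι)
    (hp : ∀ k, 0 < p k) : 0 < ∑ k, u k * p k := by
  obtain ⟨k, -, hk⟩ := exists_lt_of_sum_lt (s := univ) (f := 0) (g := u) (by simp [hu.2])
  exact sum_pos' (fun k _ => mul_nonneg (hu.1 k) (hp k).le) ⟨k, mem_univ k, mul_pos hk (hp k)⟩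

lemma sum_mul_le_mul_add_of_le_mul [DecidableEq ι] {u p : ι → ℝ} (hu : u ∈ stdSimplex ℝ ι)
    {j : ι} {δ : ℝ} (hδ : 0 ≤ δ) (hpj : 0 ≤ p j) (hp : ∀ k, k ≠ j → p k ≤ δ * p j) :
    ∑ k, u k * p k ≤ p j * (u j + δ) := by
  have hrest : ∑ k ∈ univ.erase j, u k ≤ 1 :=
    hu.2 ▸ sum_le_sum_of_subset_of_nonneg (subset_univ _) fun k _ _ => hu.1 k
  calc ∑ k, u k * p k = u j * p j + ∑ k ∈ univ.erase j, u k * p k :=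
        (add_sum_erase _ _ (mem_univ j)).symm
    _ ≤ u j * p j + ∑ k ∈ univ.erase j, u k * (δ * p j) := by
        gcongr with k hk
        exacts [hu.1 k, hp k (ne_of_mem_erase hk)]
    _ = u j * p j + (∑ k ∈ univ.erase j, u k) * (δ * p j) := by rw [sum_mul]
    _ ≤ u j * p j + δ * p j := by
        linarith [mul_le_of_le_one_left (mul_nonneg hδ hpj) hrest]
    _ = p j * (u j + δ) := by ring

section FiberFreq

variable [DecidableEq κ]

/-- The paper's `n_k / n`, for the assignment `f = k*` of points to their best model. -/
noncomputable def fiberFreq (f : ι → κ) (k : κ) : ℝ :=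
  (#{i | f i = k} : ℝ) / Fintype.card ι

lemma fiberFreq_nonneg (f : ι → κ) (k : κ) : 0 ≤ fiberFreq f k := by
  unfold fiberFreq; positivity

lemma fiberFreq_pos (f : ι → κ) (i : ι) : 0 < fiberFreq f (f i) := by
  have : 0 < #{j | f j = f i} := card_pos.mpr ⟨i, by simp⟩
  have : 0 < Fintype.card ι := Fintype.card_pos_iff.mpr ⟨i⟩
  unfold fiberFreq; positivity

variable [Fintype κ]

lemma sum_comp_eq_card_mul_sum_fiberFreq (f : ι → κ) (g : κ → ℝ) :
    ∑ i, g (f i) = Fintype.card ι * ∑ k, fiberFreq f k * g k := by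
  rcases isEmpty_or_nonempty ι with hι | hι
  · simp
  have hcard : (Fintype.card ι : ℝ) ≠ 0 := by positivity
  rw [← sum_fiberwise' univ f g, mul_sum]
  refine sum_congr rfl fun k _ => ?_
  rw [sum_const, nsmul_eq_mul, fiberFreq]
  field_simp

lemma fiberFreq_mem_stdSimplex [Nonempty ι] (f : ι → κ) :
    fiberFreq f ∈ stdSimplex ℝ κ := by
  refine ⟨fiberFreq_nonneg f, ?_⟩
  have h := sum_comp_eq_card_mul_sum_fiberFreq f fun _ => 1
  simp only [sum_const, card_univ, nsmul_eq_mul, mul_one] at h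
  exact (mul_eq_left₀ (by positivity)).mp h.symm

lemma sum_log_fiberFreq_le_sum_log_add (p : ι → κ → ℝ) (hp : ∀ i k, 0 < p i k) (f : ι → κ)
    {δ : ℝ} (hδ : 0 < δ) (hsep : ∀ i k, k ≠ f i → p i k ≤ δ * p i (f i))
    {u : κ → ℝ} (hu : u ∈ stdSimplex ℝ κ)
    (hmax : ∑ i, log (∑ k, fiberFreq f k * p i k) ≤ ∑ i, log (∑ k, u k * p i k)) :
    ∑ i, log (fiberFreq f (f i)) ≤ ∑ i, log (u (f i) + δ) := by
  have hlower : ∀ i, log (fiberFreq f (f i)) + log (p i (f i)) ≤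
      log (∑ k, fiberFreq f k * p i k) := by
    intro i
    rw [← log_mul (fiberFreq_pos f i).ne' (hp i _).ne']
    exact log_le_log (mul_pos (fiberFreq_pos f i) (hp i _))
      (single_le_sum (f := fun k => fiberFreq f k * p i k)
        (fun k _ => mul_nonneg (fiberFreq_nonneg f k) (hp i k).le) (mem_univ _))
  have hupper : ∀ i, log (∑ k, u k * p i k) ≤ log (p i (f i)) + log (u (f i) + δ) := by
    intro i
    rw [← log_mul (hp i _).ne' (by linarith [hu.1 (f i)])]
    exact log_le_log (sum_mul_pos_of_mem_stdSimplex hu (hp i))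
      (sum_mul_le_mul_add_of_le_mul hu hδ.le (hp i _).le (hsep i))
  have hlower_sum := sum_le_sum fun i (_ : i ∈ univ) => hlower i
  have hupper_sum := sum_le_sum fun i (_ : i ∈ univ) => hupper i
  rw [sum_add_distrib] at hlower_sum hupper_sum
  linarith

lemma sum_sq_sqrt_add_sub_sqrt_fiberFreq_le [Nonempty ι] (p : ι → κ → ℝ)
    (hp : ∀ i k, 0 < p i k) (f : ι → κ) {δ : ℝ} (hδ : 0 < δ)
    (hsep : ∀ i k, k ≠ f i → p i k ≤ δ * p i (f i)) {u : κ → ℝ} (hu : u ∈ stdSimplex ℝ κ)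
    (hmax : ∑ i, log (∑ k, fiberFreq f k * p i k) ≤ ∑ i, log (∑ k, u k * p i k)) :
    ∑ k, (√(u k + δ) - √(fiberFreq f k)) ^ 2 ≤ Fintype.card κ * δ := by
  have h := sum_log_fiberFreq_le_sum_log_add p hp f hδ hsep hu hmax
  rw [sum_comp_eq_card_mul_sum_fiberFreq f fun k => log (fiberFreq f k),
    sum_comp_eq_card_mul_sum_fiberFreq f fun k => log (u k + δ)] at h
  have hgibbs : 0 ≤ ∑ k, fiberFreq f k * (log (u k + δ) - log (fiberFreq f k)) := by
    rw [← sub_nonneg, ← mul_sub, ← sum_sub_distrib] at h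
    simpa only [mul_sub] using nonneg_of_mul_nonneg_right h (by positivity)
  have hhell := sum_sq_sqrt_sub_sqrt_le (fiberFreq_nonneg f)
    (fun k => add_pos_of_nonneg_of_pos (hu.1 k) hδ) hgibbs
  rw [sum_add_distrib, hu.2, (fiberFreq_mem_stdSimplex f).2, sum_const, card_univ,
    nsmul_eq_mul] at hhell
  linarith

end FiberFreq

lemma tendsto_of_sq_sqrt_sub_sqrt_le {α : Type*} {l : Filter α} {x ε : α → ℝ} {a : ℝ}
    (hx : ∀ t, 0 ≤ x t) (ha : 0 ≤ a) (h : ∀ t, (√(x t) - √a) ^ 2 ≤ ε t)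
    (hε : Tendsto ε l (𝓝 0)) : Tendsto x l (𝓝 a) := by
  have hsqrt : Tendsto (fun t => √(x t)) l (𝓝 √a) := by
    rw [tendsto_iff_norm_sub_tendsto_zero]
    refine squeeze_zero (fun _ => norm_nonneg _) (fun t => ?_) (by simpa using hε.sqrt)
    rw [Real.norm_eq_abs, ← sqrt_sq_eq_abs]
    exact sqrt_le_sqrt (h t)
  simpa [sq_sqrt, hx, ha] using hsqrt.pow 2

theorem stacking_pointwise_selection_limit_general (n K : ℕ) (hn : 0 < n)
    (p : ℝ → Fin n → Fin K → ℝ) (hp : ∀ L i k, 0 < p L i k)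
    (kstar : Fin n → Fin K)
    (hsep : ∀ L, ∀ i, ∀ k, k ≠ kstar i →
      Real.log (p L i k) + L ≤ Real.log (p L i (kstar i)))
    (w : ℝ → Fin K → ℝ)
    (hwsimplex : ∀ L, (∀ k, 0 ≤ w L k) ∧ ∑ k, w L k = 1)
    (hwmax : ∀ L, ∀ v : Fin K → ℝ, (∀ k, 0 ≤ v k) → ∑ k, v k = 1 →
      (1 / n : ℝ) * ∑ i, Real.log (∑ k, v k * p L i k) ≤
        (1 / n : ℝ) * ∑ i, Real.log (∑ k, w L k * p L i k)) :
    Tendsto w atTop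
      (nhds (fun k => (({i | kstar i = k} : Finset (Fin n)).card : ℝ) / n)) := by
  have : Nonempty (Fin n) := Fin.pos_iff_nonempty.mp hn
  have hfreq := fiberFreq_mem_stdSimplex (ι := Fin n) kstar
  have hbound : ∀ L k, (√(w L k + exp (-L)) - √(fiberFreq kstar k)) ^ 2 ≤ K * exp (-L) := by
    intro L k
    refine (single_le_sum (f := fun j => (√(w L j + exp (-L)) - √(fiberFreq kstar j)) ^ 2)
      (fun j _ => sq_nonneg _) (mem_univ k)).trans ?_
    simpa using sum_sq_sqrt_add_sub_sqrt_fiberFreq_le (p L) (hp L) kstar (exp_pos (-L))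
      (fun i k hk => le_exp_neg_mul_of_log_add_le (hp L i k) (hp L i _) (hsep L i k hk))
      (hwsimplex L) (le_of_mul_le_mul_left (hwmax L _ hfreq.1 hfreq.2) (by positivity))
  have hδ := tendsto_exp_neg_atTop_nhds_zero
  rw [tendsto_pi_nhds]
  intro k
  have := (tendsto_of_sq_sqrt_sub_sqrt_le (fun L => add_nonneg ((hwsimplex L).1 k) (exp_pos _).le)
    (fiberFreq_nonneg kstar k) (hbound · k) (by simpa using hδ.const_mul (K : ℝ))).sub hδ
  simpa [fiberFreq] using this

/-- along a family of instances indexed by the separation level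
`L` (with the same pointwise-best assignment `kstar`), any maximizers `w L` of
the stacking objective converge, as `L → ∞`, to the empirical frequencies with
which each model is pointwise best. -/
theorem stacking_pointwise_selection_limit (n K : ℕ) (hn : 0 < n) (hK : 1 ≤ K)
    (p : ℝ → Fin n → Fin K → ℝ) (hp : ∀ L i k, 0 < p L i k)
    (kstar : Fin n → Fin K)
    (hsep : ∀ L, ∀ i, ∀ k, k ≠ kstar i →
      Real.log (p L i k) + L ≤ Real.log (p L i (kstar i)))
    (hcount : ∀ k : Fin K, 0 < ({i | kstar i = k} : Finset (Fin n)).card)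
    (w : ℝ → Fin K → ℝ)
    (hwsimplex : ∀ L, (∀ k, 0 ≤ w L k) ∧ ∑ k, w L k = 1)
    (hwmax : ∀ L, ∀ v : Fin K → ℝ, (∀ k, 0 ≤ v k) → ∑ k, v k = 1 →
      (1 / n : ℝ) * ∑ i, Real.log (∑ k, v k * p L i k) ≤
        (1 / n : ℝ) * ∑ i, Real.log (∑ k, w L k * p L i k)) :
    Tendsto w atTop
      (nhds (fun k => (({i | kstar i = k} : Finset (Fin n)).card : ℝ) / n)) :=
  stacking_pointwise_selection_limit_general n K hn p hp kstar hsep w hwsimplex hwmax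
end

section
/- Let μ be a probability measure on a space X (covariate distribution), and for each x ∈ X let k*(x) ∈ {1,…,K} be measurable. Suppose for each x and each k ≠ k*(x) a measurable bound u_{x,k} ∈ [0, e^{−L}] holds, where u_{x,k}(y) = p_k(y|x)/p_{k*(x)}(y|x) ≤ e^{−L} for all y in a set of conditional probability ≥ p_0. Then for any simplex weight vector w, the objective ∫∫ log(∑_k w_k p_k(y|x)) dP_t(y|x) dμ(x) differs from ∫ log(w_{k*(x)}) dμ(x) + C_0 by at most an error term that tends to 0 as p_0 → 1 and L → ∞, where C_0 = ∫∫ log p_{k*(x)}(y|x) dP_t(y|x) dμ(x), provided the log predictive densities are uniformly integrable. -/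
/-!
Write `q = ∑ k, w k * p k` for the mixture and `k₀ = kstar x`. Since `q ≥ w k₀ * p k₀`, the inner
gap `∫ log q - log (w k₀) - ∫ log p k₀` is nonnegative. Where `k₀` beats every other model by the
margin `L`, `q ≤ (w k₀ + exp (-L)) * p k₀`, so the gap integrand is at most `exp (-L) / w k₀`.
Elsewhere `q` is still a convex combination of the `p k`, so `|log q| ≤ ∑ k, |log (p k)|`, and
uniform integrability makes the integral of this bound over the exceptional set, of probability
at most `1 - p₀`, small. These bounds are uniform in `x`, so they survive integration against `μ`.
-/

open MeasureTheory Finset Real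

section Mixture

variable {ι : Type*} [Fintype ι] {w p : ι → ℝ}

theorem abs_log_sum_mul_le (hw : ∀ k, 0 ≤ w k) (hw1 : ∑ k, w k = 1) (hp : ∀ k, 0 < p k) :
    |log (∑ k, w k * p k)| ≤ ∑ k, |log (p k)| := by
  set M := ∑ k, |log (p k)|
  have hbound : ∀ k, exp (-M) ≤ p k ∧ p k ≤ exp M := fun k => by
    have hk : |log (p k)| ≤ M :=
      single_le_sum (f := fun k => |log (p k)|) (fun k _ => abs_nonneg _) (mem_univ k)
    rw [← exp_log (hp k)]
    exact ⟨exp_le_exp.2 (by linarith [neg_abs_le (log (p k))]),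
      exp_le_exp.2 ((le_abs_self _).trans hk)⟩
  have hlow : exp (-M) ≤ ∑ k, w k * p k := calc
    exp (-M) = ∑ k, w k * exp (-M) := by rw [← sum_mul, hw1, one_mul]
    _ ≤ ∑ k, w k * p k := sum_le_sum fun k _ => mul_le_mul_of_nonneg_left (hbound k).1 (hw k)
  have hup : ∑ k, w k * p k ≤ exp M := calc
    ∑ k, w k * p k ≤ ∑ k, w k * exp M :=
      sum_le_sum fun k _ => mul_le_mul_of_nonneg_left (hbound k).2 (hw k)
    _ = exp M := by rw [← sum_mul, hw1, one_mul]
  rw [abs_le]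
  exact ⟨by simpa using log_le_log (exp_pos _) hlow,
    by simpa using log_le_log ((exp_pos _).trans_le hlow) hup⟩

theorem log_sum_mul_sub_log_sub_log_le (hw : ∀ k, 0 ≤ w k) (hw1 : ∑ k, w k = 1)
    (hp : ∀ k, 0 < p k) (k₀ : ι) :
    log (∑ k, w k * p k) - log (p k₀) - log (w k₀) ≤ |log (w k₀)| + 2 * ∑ k, |log (p k)| := by
  have hk₀ : |log (p k₀)| ≤ ∑ k, |log (p k)| :=
    single_le_sum (f := fun k => |log (p k)|) (fun k _ => abs_nonneg _) (mem_univ k₀)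
  linarith [abs_log_sum_mul_le hw hw1 hp, le_abs_self (log (∑ k, w k * p k)),
    neg_abs_le (log (p k₀)), neg_abs_le (log (w k₀))]

theorem mul_le_sum_mul (hw : ∀ k, 0 ≤ w k) (hp : ∀ k, 0 ≤ p k) (k₀ : ι) :
    w k₀ * p k₀ ≤ ∑ k, w k * p k :=
  single_le_sum (f := fun k => w k * p k) (fun k _ => mul_nonneg (hw k) (hp k)) (mem_univ k₀)

theorem log_add_log_le_log_sum_mul (hw : ∀ k, 0 ≤ w k) (hp : ∀ k, 0 < p k) {k₀ : ι}
    (hk₀ : 0 < w k₀) : log (w k₀) + log (p k₀) ≤ log (∑ k, w k * p k) := by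
  rw [← log_mul hk₀.ne' (hp k₀).ne']
  exact log_le_log (mul_pos hk₀ (hp k₀)) (mul_le_sum_mul hw (fun k => (hp k).le) k₀)

theorem log_add_le_log_add_div {a b : ℝ} (ha : 0 < a) (hb : 0 ≤ b) :
    log (a + b) ≤ log a + b / a := by
  rw [log_le_iff_le_exp (by positivity), exp_add, exp_log ha]
  calc a + b = a * (b / a + 1) := by field_simp; ring
    _ ≤ a * exp (b / a) := mul_le_mul_of_nonneg_left (add_one_le_exp _) ha.le

theorem log_sum_mul_le_of_forall_ne_add_le (hw : ∀ k, 0 ≤ w k) (hw1 : ∑ k, w k ≤ 1)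
    (hp : ∀ k, 0 < p k) {k₀ : ι} (hk₀ : 0 < w k₀) {L : ℝ}
    (hsep : ∀ k, k ≠ k₀ → log (p k) + L ≤ log (p k₀)) :
    log (∑ k, w k * p k) ≤ log (w k₀) + log (p k₀) + exp (-L) / w k₀ := by
  classical
  have hratio : ∀ k, k ≠ k₀ → p k ≤ exp (-L) * p k₀ := fun k hk => calc
    p k = exp (log (p k)) := (exp_log (hp k)).symm
    _ ≤ exp (-L + log (p k₀)) := exp_le_exp.2 (by linarith [hsep k hk])
    _ = exp (-L) * p k₀ := by rw [exp_add, exp_log (hp k₀)]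
  have hrest : ∑ k ∈ univ.erase k₀, w k * p k ≤ exp (-L) * p k₀ := calc
    ∑ k ∈ univ.erase k₀, w k * p k ≤ ∑ k ∈ univ.erase k₀, w k * (exp (-L) * p k₀) :=
      sum_le_sum fun k hk => mul_le_mul_of_nonneg_left (hratio k (ne_of_mem_erase hk)) (hw k)
    _ = (∑ k ∈ univ.erase k₀, w k) * (exp (-L) * p k₀) := by rw [sum_mul]
    _ ≤ 1 * (exp (-L) * p k₀) := mul_le_mul_of_nonneg_right
      ((sum_le_sum_of_subset_of_nonneg (erase_subset _ _) fun k _ _ => hw k).trans hw1)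
      (mul_pos (exp_pos _) (hp k₀)).le
    _ = exp (-L) * p k₀ := one_mul _
  have hmix : ∑ k, w k * p k ≤ (w k₀ + exp (-L)) * p k₀ := by
    rw [← add_sum_erase _ _ (mem_univ k₀)]
    linarith
  calc log (∑ k, w k * p k) ≤ log ((w k₀ + exp (-L)) * p k₀) :=
        log_le_log ((mul_pos hk₀ (hp k₀)).trans_le (mul_le_sum_mul hw (fun k => (hp k).le) k₀))
          hmix
    _ = log (w k₀ + exp (-L)) + log (p k₀) := log_mul (by positivity) (hp k₀).ne'
    _ ≤ log (w k₀) + log (p k₀) + exp (-L) / w k₀ := by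
      linarith [log_add_le_log_add_div hk₀ (exp_pos (-L)).le]

end Mixture

def separationSet {ι Y : Type*} (f : ι → Y → ℝ) (k₀ : ι) (L : ℝ) : Set Y :=
  {y | ∀ k, k ≠ k₀ → f k y + L ≤ f k₀ y}

section Gap

variable {Y : Type*} [MeasurableSpace Y] {ν : Measure Y}

theorem nullMeasurableSet_separationSet {ι : Type*} [Countable ι] {f : ι → Y → ℝ}
    (hf : ∀ k, AEMeasurable (f k) ν) (k₀ : ι) (L : ℝ) :
    NullMeasurableSet (separationSet f k₀ L) ν := by
  simp only [separationSet, Set.ofPred_forall]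
  exact .iInter fun k => .iInter fun _ => nullMeasurableSet_le ((hf k).add_const L) (hf k₀)

theorem prob_compl_le_ofReal [IsProbabilityMeasure ν] {s : Set Y} (hs : NullMeasurableSet s ν)
    {a : ℝ} (h : ENNReal.ofReal (1 - a) ≤ ν s) : ν sᶜ ≤ ENNReal.ofReal a := by
  rw [prob_compl_eq_one_sub₀ hs, tsub_le_iff_right]
  calc (1 : ENNReal) = ENNReal.ofReal (a + (1 - a)) := by simp
    _ ≤ ENNReal.ofReal a + ENNReal.ofReal (1 - a) := ENNReal.ofReal_add_le
    _ ≤ ENNReal.ofReal a + ν s := by gcongr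

theorem AEMeasurable.of_log {f : Y → ℝ} (hf : AEMeasurable (fun y => log (f y)) ν)
    (hpos : ∀ y, 0 < f y) : AEMeasurable f ν :=
  hf.exp.congr (ae_of_all _ fun y => exp_log (hpos y))

variable {ι : Type*} [Fintype ι] {w : ι → ℝ} {p : ι → Y → ℝ}

theorem integrable_log_sum_mul (hw : ∀ k, 0 ≤ w k) (hw1 : ∑ k, w k = 1)
    (hp : ∀ k y, 0 < p k y) (hint : ∀ k, Integrable (fun y => log (p k y)) ν) :
    Integrable (fun y => log (∑ k, w k * p k y)) ν := by
  refine (integrable_finsetSum univ fun k _ => (hint k).abs).mono' ?_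
    (ae_of_all _ fun y => abs_log_sum_mul_le hw hw1 fun k => hp k y)
  exact (Finset.aemeasurable_fun_sum univ fun k _ =>
    ((hint k).aemeasurable.of_log (hp k)).const_mul (w k)).log.aestronglyMeasurable

variable [IsProbabilityMeasure ν]

theorem log_mixture_gap_nonneg (hw : ∀ k, 0 ≤ w k) (hw1 : ∑ k, w k = 1)
    (hp : ∀ k y, 0 < p k y) (hint : ∀ k, Integrable (fun y => log (p k y)) ν) {k₀ : ι}
    (hk₀ : 0 < w k₀) :
    0 ≤ (∫ y, log (∑ k, w k * p k y) ∂ν) - log (w k₀) - ∫ y, log (p k₀ y) ∂ν := by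
  have h : ∫ y, (log (w k₀) + log (p k₀ y)) ∂ν ≤ ∫ y, log (∑ k, w k * p k y) ∂ν :=
    integral_mono ((integrable_const _).add (hint k₀))
    (integrable_log_sum_mul hw hw1 hp hint)
    fun y => log_add_log_le_log_sum_mul hw (fun k => hp k y) hk₀
  rw [integral_add (integrable_const _) (hint k₀), integral_const, probReal_univ,
    one_smul] at h
  linarith

theorem log_mixture_gap_le (hw : ∀ k, 0 ≤ w k) (hw1 : ∑ k, w k = 1)
    (hp : ∀ k y, 0 < p k y) (hint : ∀ k, Integrable (fun y => log (p k y)) ν) {k₀ : ι}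
    (hk₀ : 0 < w k₀) (L : ℝ) :
    (∫ y, log (∑ k, w k * p k y) ∂ν) - log (w k₀) - ∫ y, log (p k₀ y) ∂ν ≤
      exp (-L) / w k₀ +
        ν.real (separationSet (fun k y => log (p k y)) k₀ L)ᶜ * |log (w k₀)| +
        2 * ∑ k, ∫ y in (separationSet (fun k y => log (p k y)) k₀ L)ᶜ, |log (p k y)| ∂ν := by
  set S := separationSet (fun k y => log (p k y)) k₀ L
  set G : Y → ℝ := fun y => |log (w k₀)| + 2 * ∑ k, |log (p k y)|
  have hS : NullMeasurableSet Sᶜ ν :=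
    (nullMeasurableSet_separationSet (fun k => (hint k).aemeasurable) k₀ L).compl
  have hq := integrable_log_sum_mul hw hw1 hp hint
  have hq₀ : Integrable (fun y => log (∑ k, w k * p k y) - log (p k₀ y)) ν := hq.sub (hint k₀)
  have hsum := integrable_finsetSum univ fun k _ => (hint k).abs
  have hG : Integrable (Sᶜ.indicator G) ν :=
    ((integrable_const _).add (hsum.const_mul 2)).indicator₀ hS
  have hgap_le : ∀ y, log (∑ k, w k * p k y) - log (p k₀ y) - log (w k₀) ≤
      exp (-L) / w k₀ + Sᶜ.indicator G y := by
    intro y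
    by_cases hy : y ∈ S
    · rw [Set.indicator_of_notMem (Set.notMem_compl_iff.2 hy), add_zero]
      linarith [log_sum_mul_le_of_forall_ne_add_le hw hw1.le (fun k => hp k y) hk₀ hy]
    · rw [Set.indicator_of_mem hy]
      have : 0 ≤ exp (-L) / w k₀ := by positivity
      linarith [log_sum_mul_sub_log_sub_log_le hw hw1 (fun k => hp k y) k₀]
  calc (∫ y, log (∑ k, w k * p k y) ∂ν) - log (w k₀) - ∫ y, log (p k₀ y) ∂ν
      = ∫ y, (log (∑ k, w k * p k y) - log (p k₀ y) - log (w k₀)) ∂ν := by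
        rw [integral_sub hq₀ (integrable_const _), integral_sub hq (hint k₀),
          integral_const, probReal_univ, one_smul]
        ring
    _ ≤ ∫ y, (exp (-L) / w k₀ + Sᶜ.indicator G y) ∂ν :=
        integral_mono (hq₀.sub (integrable_const _))
          ((integrable_const _).add hG) hgap_le
    _ = exp (-L) / w k₀ + ν.real Sᶜ * |log (w k₀)| +
          2 * ∑ k, ∫ y in Sᶜ, |log (p k y)| ∂ν := by
        rw [integral_add (integrable_const _) hG, integral_indicator₀ hS,
          integral_add (integrable_const _) (hsum.const_mul 2).restrict, integral_const_mul,
          integral_finsetSum univ fun k _ => (hint k).abs.restrict]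
        simp only [integral_const, measureReal_restrict_apply_univ, probReal_univ, smul_eq_mul]
        ring

theorem abs_log_mixture_gap_le (hw : ∀ k, 0 < w k) (hw1 : ∑ k, w k = 1)
    (hp : ∀ k y, 0 < p k y) (hint : ∀ k, Integrable (fun y => log (p k y)) ν) (k₀ : ι)
    {L δ η : ℝ} (hδ : 0 ≤ δ)
    (hsep : ENNReal.ofReal (1 - δ) ≤ ν (separationSet (fun k y => log (p k y)) k₀ L))
    (hUI : ∀ k, ∀ s : Set Y, ν s ≤ ENNReal.ofReal δ → ∫ y in s, |log (p k y)| ∂ν ≤ η) :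
    |(∫ y, log (∑ k, w k * p k y) ∂ν) - log (w k₀) - ∫ y, log (p k₀ y) ∂ν| ≤
      (∑ k, (w k)⁻¹) * exp (-L) + (∑ k, |log (w k)|) * δ + 2 * Fintype.card ι * η := by
  set S := separationSet (fun k y => log (p k y)) k₀ L
  have hw' : ∀ k, 0 ≤ w k := fun k => (hw k).le
  have hS : ν Sᶜ ≤ ENNReal.ofReal δ :=
    prob_compl_le_ofReal (nullMeasurableSet_separationSet (fun k => (hint k).aemeasurable) k₀ L)
      hsep
  have hinv : (w k₀)⁻¹ ≤ ∑ k, (w k)⁻¹ :=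
    single_le_sum (fun k _ => (inv_pos.2 (hw k)).le) (mem_univ k₀)
  have hlog : |log (w k₀)| ≤ ∑ k, |log (w k)| :=
    single_le_sum (f := fun k => |log (w k)|) (fun k _ => abs_nonneg _) (mem_univ k₀)
  have hSc : ν.real Sᶜ ≤ δ := ENNReal.toReal_le_of_le_ofReal hδ hS
  have hUIS : ∑ k, ∫ y in Sᶜ, |log (p k y)| ∂ν ≤ Fintype.card ι * η :=
    (sum_le_sum fun k _ => hUI k Sᶜ hS).trans_eq (by simp)
  rw [abs_of_nonneg (log_mixture_gap_nonneg hw' hw1 hp hint (hw k₀))]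
  calc _ ≤ exp (-L) / w k₀ + ν.real Sᶜ * |log (w k₀)| +
        2 * ∑ k, ∫ y in Sᶜ, |log (p k y)| ∂ν := log_mixture_gap_le hw' hw1 hp hint (hw k₀) L
    _ ≤ (∑ k, (w k)⁻¹) * exp (-L) + (∑ k, |log (w k)|) * δ + 2 * (Fintype.card ι * η) := by
      rw [div_eq_mul_inv, mul_comm (exp _), mul_comm (ν.real _)]
      gcongr
    _ = _ := by ring

end Gap

theorem abs_integral_sub_add_le {X : Type*} [MeasurableSpace X] {μ : Measure X}
    [IsProbabilityMeasure μ] {f g h : X → ℝ} (hf : Integrable f μ) (hg : Integrable g μ)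
    (hh : Integrable h μ) {ε : ℝ} (hε : ∀ x, |f x - g x - h x| ≤ ε) :
    |(∫ x, f x ∂μ) - ((∫ x, g x ∂μ) + ∫ x, h x ∂μ)| ≤ ε := by
  rw [← sub_sub, ← integral_sub hf hg, ← integral_sub (f := fun x => f x - g x) (hf.sub hg) hh,
    ← Real.norm_eq_abs]
  simpa using norm_integral_le_of_norm_le_const (f := fun x => f x - g x - h x) (ae_of_all μ hε)

theorem stacking_local_separation_decomposition_general
    {X Y : Type*} [MeasurableSpace X] [MeasurableSpace Y]
    (μ : Measure X) [IsProbabilityMeasure μ]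
    (Pt : X → Measure Y) (hPt : ∀ x, IsProbabilityMeasure (Pt x))
    (K : ℕ) (p : Fin K → X → Y → ℝ)
    (hp : ∀ k x y, 0 < p k x y)
    (kstar : X → Fin K) (hkstar : Measurable kstar)
    -- uniform integrability of the log predictive densities:
    (hUI : ∀ ε > (0 : ℝ), ∃ δ > (0 : ℝ), ∀ x, ∀ k, ∀ s : Set Y,
      Pt x s ≤ ENNReal.ofReal δ →
      ∫ y in s, |Real.log (p k x y)| ∂(Pt x) ≤ ε)
    (hIntInner : ∀ x k, Integrable (fun y => Real.log (p k x y)) (Pt x))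
    (hIntOuter : ∀ w : Fin K → ℝ, (∀ k, 0 < w k) → ∑ k, w k = 1 →
      Integrable (fun x => ∫ y, Real.log (∑ k, w k * p k x y) ∂(Pt x)) μ)
    (hC0 : Integrable (fun x => ∫ y, Real.log (p (kstar x) x y) ∂(Pt x)) μ)
    (w : Fin K → ℝ) (hw0 : ∀ k, 0 < w k) (hw1 : ∑ k, w k = 1) :
    ∀ ε > (0 : ℝ), ∃ δ > (0 : ℝ), ∃ L₀ : ℝ, ∀ L ≥ L₀, ∀ p₀ : ℝ, 1 - δ ≤ p₀ →
      -- the local separable condition with margin `L` and probability `p₀`: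
      (∀ x, ENNReal.ofReal p₀ ≤
        Pt x {y | ∀ k, k ≠ kstar x →
          Real.log (p k x y) + L ≤ Real.log (p (kstar x) x y)}) →
      |(∫ x, ∫ y, Real.log (∑ k, w k * p k x y) ∂(Pt x) ∂μ) -
        ((∫ x, Real.log (w (kstar x)) ∂μ) +
          ∫ x, ∫ y, Real.log (p (kstar x) x y) ∂(Pt x) ∂μ)| ≤ ε := by
  intro ε hε
  have hε3 : 0 < ε / 3 := by positivity
  obtain ⟨e, he, heB⟩ := exists_pos_mul_lt hε3 (∑ k, (w k)⁻¹)
  obtain ⟨δ₂, hδ₂, hδA⟩ := exists_pos_mul_lt hε3 (∑ k, |log (w k)|)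
  obtain ⟨η, hη, hηK⟩ := exists_pos_mul_lt hε3 (2 * K)
  obtain ⟨δ₁, hδ₁, hUIη⟩ := hUI η hη
  refine ⟨min δ₁ δ₂, lt_min hδ₁ hδ₂, -log e, fun L hL p₀ hp₀ hsep => ?_⟩
  have hexp : exp (-L) ≤ e := (exp_le_exp.2 (by linarith)).trans_eq (exp_log he)
  refine abs_integral_sub_add_le (hIntOuter w hw0 hw1)
    (Integrable.of_finite.comp_measurable (g := fun k => log (w k)) hkstar) hC0 fun x => ?_
  have := hPt x
  refine (abs_log_mixture_gap_le hw0 hw1 (hp · x) (hIntInner x) (kstar x)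
    (lt_min hδ₁ hδ₂).le ((ENNReal.ofReal_le_ofReal (by linarith)).trans (hsep x))
    fun k s hs => hUIη x k s (hs.trans (ENNReal.ofReal_le_ofReal (min_le_left _ _)))).trans ?_
  rw [Fintype.card_fin]
  calc _ ≤ (∑ k, (w k)⁻¹) * e + (∑ k, |log (w k)|) * δ₂ + 2 * K * η := by
        gcongr
        · exact sum_nonneg fun k _ => (inv_pos.2 (hw0 k)).le
        · exact min_le_right _ _
    _ ≤ ε := by linarith

/-- under the local separable condition (with conditional
probability at least `p₀`, the locally best model beats every other model by a
log-margin `L`), and a uniform-integrability condition on the log predictive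
densities, the stacking objective differs from
`∫ log w_{k*(x)} dμ(x) + C₀` by an error that tends to `0` as `p₀ → 1` and
`L → ∞`. -/
theorem stacking_local_separation_decomposition
    {X Y : Type*} [MeasurableSpace X] [MeasurableSpace Y]
    (μ : Measure X) [IsProbabilityMeasure μ]
    (Pt : X → Measure Y) (hPt : ∀ x, IsProbabilityMeasure (Pt x))
    (K : ℕ) (hK : 1 ≤ K) (p : Fin K → X → Y → ℝ)
    (hp : ∀ k x y, 0 < p k x y)
    (kstar : X → Fin K) (hkstar : Measurable kstar)
    -- uniform integrability of the log predictive densities: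
    (hUI : ∀ ε > (0 : ℝ), ∃ δ > (0 : ℝ), ∀ x, ∀ k, ∀ s : Set Y,
      Pt x s ≤ ENNReal.ofReal δ →
      ∫ y in s, |Real.log (p k x y)| ∂(Pt x) ≤ ε)
    (hIntInner : ∀ x k, Integrable (fun y => Real.log (p k x y)) (Pt x))
    (hIntOuter : ∀ w : Fin K → ℝ, (∀ k, 0 < w k) → ∑ k, w k = 1 →
      Integrable (fun x => ∫ y, Real.log (∑ k, w k * p k x y) ∂(Pt x)) μ)
    (hC0 : Integrable (fun x => ∫ y, Real.log (p (kstar x) x y) ∂(Pt x)) μ)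
    (w : Fin K → ℝ) (hw0 : ∀ k, 0 < w k) (hw1 : ∑ k, w k = 1) :
    ∀ ε > (0 : ℝ), ∃ δ > (0 : ℝ), ∃ L₀ : ℝ, ∀ L ≥ L₀, ∀ p₀ : ℝ, 1 - δ ≤ p₀ →
      -- the local separable condition with margin `L` and probability `p₀`:
      (∀ x, ENNReal.ofReal p₀ ≤
        Pt x {y | ∀ k, k ≠ kstar x →
          Real.log (p k x y) + L ≤ Real.log (p (kstar x) x y)}) →
      |(∫ x, ∫ y, Real.log (∑ k, w k * p k x y) ∂(Pt x) ∂μ) -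
        ((∫ x, Real.log (w (kstar x)) ∂μ) +
          ∫ x, ∫ y, Real.log (p (kstar x) x y) ∂(Pt x) ∂μ)| ≤ ε :=
  stacking_local_separation_decomposition_general μ Pt hPt K p hp kstar hkstar hUI hIntInner
    hIntOuter hC0 w hw0 hw1
end
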